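/- With Q_{n,r} as above and M_n = ⊕_{r≥n} Q_{n,r}, the Hilbert space ℓ²(V) of the binary tree decomposes as the orthogonal direct sum ℓ²(V) = ⊕_{n≥0} M_n, and each M_n is invariant under both Π and Π* (hence under L = Π + Π*). -/

import Mathlib

/-! Π maps ℓ²(S_r) into ℓ²(S_{r+1}) and Π*Π = 2, so Π^j multiplies inner products by 2^j.
Hence Q_{m,r} ⊥ Q_{n,s} for m < n: for r ≠ s the spheres are orthogonal, and for r = s both
spaces are Π^{r-n}-images of Q_{m,n} ⊥ Q_{n,n}. Since ℓ²(S_r) is finite-dimensional,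
ℓ²(S_r) = (Q_{0,r} ⊕ ⋯ ⊕ Q_{r-1,r}) ⊕ Q_{r,r}. This puts every δ_v in ⊕ M_n, which gives density,
and for ψ ∈ Q_{n,n} it puts ΠΠ*ψ in Q_{0,n} ⊕ ⋯ ⊕ Q_{n-1,n}, so ‖Π*ψ‖² = ⟨ΠΠ*ψ, ψ⟩ = 0.
Together with Π*Π = 2 this makes each M_n invariant under Π*. -/

open scoped InnerProductSpace

noncomputable section

/-- ℓ²(V) for the binary tree V = List Bool (root [], children of v are b::v). -/
abbrev H2 := lp (fun _ : List Bool => ℂ) 2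

/-- The subspace ℓ²(S_r) of functions supported on the sphere S_r = {v : |v| = r}. -/
def ellS (r : ℕ) : Submodule ℂ H2 where
  carrier := {φ | ∀ v : List Bool, v.length ≠ r → φ v = 0}
  add_mem' := by
    intro a b ha hb v hv
    have : (↑(a + b) : ∀ _ : List Bool, ℂ) v = a v + b v := by
      rw [lp.coeFn_add]; rfl
    rw [this, ha v hv, hb v hv, add_zero]
  zero_mem' := by
    intro v hv
    have : (↑(0 : H2) : ∀ _ : List Bool, ℂ) v = 0 := by rw [lp.coeFn_zero]; rfl
    rw [this]
  smul_mem' := by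
    intro c a ha v hv
    have : (↑(c • a) : ∀ _ : List Bool, ℂ) v = c • a v := by
      rw [lp.coeFn_smul]; rfl
    rw [this, ha v hv, smul_zero]

/-- The initial subspaces Q_{n,n}: Q_{0,0} = ℓ²(S_0), and
Q_{n,n} = ℓ²(S_n) ⊖ (Q_{0,n} ⊕ ⋯ ⊕ Q_{n−1,n}), where Q_{m,n} = Π^{n−m} Q_{m,m}. -/
def Qnn (P : H2 →L[ℂ] H2) : ℕ → Submodule ℂ H2
  | n => ellS n ⊓ (⨆ m : Fin n, Submodule.map ((P ^ (n - (m : ℕ)) : H2 →L[ℂ] H2) : H2 →ₗ[ℂ] H2) (Qnn P m))ᗮ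
  termination_by n => n
  decreasing_by exact m.isLt

/-- The subspaces Q_{n,r} = Π^{r−n} Q_{n,n} (for r ≥ n). -/
def Qs (P : H2 →L[ℂ] H2) (n r : ℕ) : Submodule ℂ H2 :=
  Submodule.map ((P ^ (r - n) : H2 →L[ℂ] H2) : H2 →ₗ[ℂ] H2) (Qnn P n)


/-- The invariant subspaces M_n = ⊕_{r ≥ n} Q_{n,r}. -/
def Msub (P : H2 →L[ℂ] H2) (n : ℕ) : Submodule ℂ H2 :=
  ⨆ j : ℕ, Qs P n (n + j)


theorem Submodule.IsOrtho.map_of_inner_map_map {𝕜 E F : Type*} [RCLike 𝕜]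
    [NormedAddCommGroup E] [InnerProductSpace 𝕜 E] [NormedAddCommGroup F] [InnerProductSpace 𝕜 F]
    {T : E →ₗ[𝕜] F} {c : 𝕜} (hT : ∀ x y, ⟪T x, T y⟫_𝕜 = c * ⟪x, y⟫_𝕜)
    {U V : Submodule 𝕜 E} (h : U ⟂ V) : U.map T ⟂ V.map T := by
  rw [Submodule.isOrtho_iff_inner_eq]
  rintro _ ⟨x, hx, rfl⟩ _ ⟨y, hy, rfl⟩
  rw [hT, h.inner_eq hx hy, mul_zero]

lemma ellS_isOrtho {r s : ℕ} (hrs : r ≠ s) : ellS r ⟂ ellS s := by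
  rw [Submodule.isOrtho_iff_inner_eq]
  intro φ hφ ψ hψ
  rw [lp.inner_eq_tsum]
  convert tsum_zero with v
  rcases eq_or_ne v.length r with h | h
  · rw [hψ v (h ▸ hrs), inner_zero_right]
  · rw [hφ v h, inner_zero_left]

instance finiteDimensional_ellS (r : ℕ) : FiniteDimensional ℂ (ellS r) := by
  let restrict : ellS r →ₗ[ℂ] (List.Vector Bool r → ℂ) :=
    { toFun := fun φ v => (φ : H2) v.1
      map_add' := fun _ _ => rfl
      map_smul' := fun _ _ => rfl }
  refine FiniteDimensional.of_injective restrict fun a b h =>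
    Subtype.ext <| lp.ext <| funext fun v => ?_
  rcases eq_or_ne v.length r with hv | hv
  · exact congrFun h ⟨v, hv⟩
  · rw [a.2 v hv, b.2 v hv]

lemma single_mem_ellS (v : List Bool) : lp.single 2 v (1 : ℂ) ∈ ellS v.length :=
  fun _ hw => lp.single_apply_ne 2 v 1 fun e => hw (congrArg List.length e)

lemma apply_eq_inner_single (f : H2) (v : List Bool) :
    f v = ⟪lp.single 2 v (1 : ℂ), f⟫_ℂ := by
  rw [lp.inner_single_left, RCLike.inner_apply, map_one, mul_one]

def Qbelow (P : H2 →L[ℂ] H2) (n : ℕ) : Submodule ℂ H2 := ⨆ m : Fin n, Qs P m n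

section Subspaces

variable {P : H2 →L[ℂ] H2}

lemma Qnn_eq (n : ℕ) : Qnn P n = ellS n ⊓ (Qbelow P n)ᗮ := by
  rw [Qnn]; rfl

lemma Qnn_le_ellS (n : ℕ) : Qnn P n ≤ ellS n := by
  rw [Qnn_eq]; exact inf_le_left

lemma Qbelow_isOrtho_Qnn (n : ℕ) : Qbelow P n ⟂ Qnn P n :=
  (Submodule.isOrtho_orthogonal_left _).symm.mono_right (by rw [Qnn_eq]; exact inf_le_right)

lemma Qs_le_Qbelow {m n : ℕ} (h : m < n) : Qs P m n ≤ Qbelow P n :=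
  le_iSup (fun k : Fin n => Qs P k n) ⟨m, h⟩

lemma Qs_self (n : ℕ) : Qs P n n = Qnn P n := by
  rw [Qs, Nat.sub_self, pow_zero]
  exact Submodule.map_id _

lemma Qs_add {m n : ℕ} (h : m ≤ n) (j : ℕ) :
    Qs P m (n + j) = (Qs P m n).map ((P ^ j : H2 →L[ℂ] H2) : H2 →ₗ[ℂ] H2) := by
  rw [Qs, Qs, ← Submodule.map_comp, show n + j - m = j + (n - m) by omega, pow_add]
  rfl

lemma Qs_succ {m n : ℕ} (h : m ≤ n) : Qs P m (n + 1) = (Qs P m n).map (P : H2 →ₗ[ℂ] H2) := by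
  rw [Qs_add h, pow_one]

lemma Qs_le_Msub {n r : ℕ} (h : n ≤ r) : Qs P n r ≤ Msub P n := by
  obtain ⟨j, rfl⟩ := Nat.exists_eq_add_of_le h
  exact le_iSup (fun j => Qs P n (n + j)) j

lemma Msub_le_comap (n : ℕ) : Msub P n ≤ (Msub P n).comap (P : H2 →ₗ[ℂ] H2) :=
  iSup_le fun j => by
    rw [← Submodule.map_le_iff_le_comap, ← Qs_succ (Nat.le_add_right n j)]
    exact Qs_le_Msub (by omega)

end Subspaces

section TreeShift

variable {P : H2 →L[ℂ] H2}
  (hP : ∀ (φ : H2) (v : List Bool), P φ v = if v = [] then 0 else φ v.tail)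
include hP

lemma P_single (v : List Bool) :
    P (lp.single 2 v (1 : ℂ)) = lp.single 2 (true :: v) 1 + lp.single 2 (false :: v) 1 := by
  ext w
  rw [lp.coeFn_add, Pi.add_apply, hP]
  cases w with
  | nil => simp [lp.single_apply]
  | cons b u => cases b <;> simp [lp.single_apply, Pi.single_apply]

lemma adjoint_P_apply (ψ : H2) (v : List Bool) :
    ContinuousLinearMap.adjoint P ψ v = ψ (true :: v) + ψ (false :: v) := by
  rw [apply_eq_inner_single, ContinuousLinearMap.adjoint_inner_right, P_single hP,
    inner_add_left, ← apply_eq_inner_single, ← apply_eq_inner_single]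

lemma adjoint_P_P (φ : H2) : ContinuousLinearMap.adjoint P (P φ) = (2 : ℂ) • φ := by
  ext v
  rw [adjoint_P_apply hP, hP, hP, lp.coeFn_smul, Pi.smul_apply]
  simp only [reduceCtorEq, if_false, List.tail_cons, smul_eq_mul]
  ring

lemma inner_P_P (φ ψ : H2) : ⟪P φ, P ψ⟫_ℂ = 2 * ⟪φ, ψ⟫_ℂ := by
  rw [← ContinuousLinearMap.adjoint_inner_left, adjoint_P_P hP, inner_smul_left, map_ofNat]

lemma inner_P_pow_P_pow (j : ℕ) (φ ψ : H2) :
    ⟪(P ^ j) φ, (P ^ j) ψ⟫_ℂ = 2 ^ j * ⟪φ, ψ⟫_ℂ := by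
  induction j with
  | zero => simp
  | succ j ih => rw [pow_succ', mul_apply_eq_comp, mul_apply_eq_comp,
      inner_P_P hP, ih, pow_succ']; ring

lemma P_mem_ellS {r : ℕ} {φ : H2} (hφ : φ ∈ ellS r) : P φ ∈ ellS (r + 1) := by
  intro v hv
  rw [hP]
  cases v with
  | nil => rfl
  | cons b w => exact hφ w fun e => hv (by simp [e])

lemma adjoint_P_mem_ellS {r : ℕ} {ψ : H2} (hψ : ψ ∈ ellS (r + 1)) :
    ContinuousLinearMap.adjoint P ψ ∈ ellS r := by
  intro v hv
  rw [adjoint_P_apply hP, hψ _ (by simp [hv]), hψ _ (by simp [hv]), add_zero]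

lemma adjoint_P_eq_zero_of_mem_ellS_zero {ψ : H2} (hψ : ψ ∈ ellS 0) :
    ContinuousLinearMap.adjoint P ψ = 0 := by
  ext v
  rw [adjoint_P_apply hP, hψ _ (by simp), hψ _ (by simp), add_zero]
  rfl

lemma Qs_le_ellS {n r : ℕ} (h : n ≤ r) : Qs P n r ≤ ellS r := by
  induction r, h using Nat.le_induction with
  | base => rw [Qs_self]; exact Qnn_le_ellS n
  | succ r hnr ih =>
    rw [Qs_succ hnr, Submodule.map_le_iff_le_comap]
    exact fun φ hφ => P_mem_ellS hP (ih hφ)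

lemma Qbelow_le_ellS (r : ℕ) : Qbelow P r ≤ ellS r :=
  iSup_le fun m => Qs_le_ellS hP m.isLt.le

lemma ellS_le_Qbelow_sup_Qnn (r : ℕ) : ellS r ≤ Qbelow P r ⊔ Qnn P r := by
  intro x hx
  have : FiniteDimensional ℂ (Qbelow P r) := Submodule.finiteDimensional_of_le (Qbelow_le_ellS hP r)
  obtain ⟨y, hy, z, hz, rfl⟩ := (Qbelow P r).exists_add_mem_mem_orthogonal x
  have hz_ellS : z ∈ ellS r := by
    simpa using sub_mem hx (Qbelow_le_ellS hP r hy)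
  exact Submodule.add_mem_sup hy (by rw [Qnn_eq]; exact ⟨hz_ellS, hz⟩)

lemma map_ellS_le_Qbelow_succ (r : ℕ) : (ellS r).map (P : H2 →ₗ[ℂ] H2) ≤ Qbelow P (r + 1) := by
  refine (Submodule.map_mono (ellS_le_Qbelow_sup_Qnn hP r)).trans ?_
  rw [Submodule.map_sup, sup_le_iff, Qbelow, Submodule.map_iSup, ← Qs_self, ← Qs_succ le_rfl]
  refine ⟨iSup_le fun m => ?_, Qs_le_Qbelow r.lt_succ_self⟩
  rw [← Qs_succ m.isLt.le]
  exact Qs_le_Qbelow (by omega)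

lemma adjoint_P_eq_zero_of_mem_Qnn {n : ℕ} {ψ : H2} (hψ : ψ ∈ Qnn P n) :
    ContinuousLinearMap.adjoint P ψ = 0 := by
  cases n with
  | zero => exact adjoint_P_eq_zero_of_mem_ellS_zero hP (Qnn_le_ellS 0 hψ)
  | succ r =>
    have hPP : P (ContinuousLinearMap.adjoint P ψ) ∈ Qbelow P (r + 1) :=
      map_ellS_le_Qbelow_succ hP r ⟨_, adjoint_P_mem_ellS hP (Qnn_le_ellS _ hψ), rfl⟩
    rw [← inner_self_eq_zero (𝕜 := ℂ), ContinuousLinearMap.adjoint_inner_left]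
    exact (Qbelow_isOrtho_Qnn _).symm.inner_eq hψ hPP

lemma Qs_isOrtho_of_lt {m n r s : ℕ} (hmn : m < n) (hmr : m ≤ r) (hns : n ≤ s) :
    Qs P m r ⟂ Qs P n s := by
  rcases eq_or_ne r s with rfl | hrs
  · obtain ⟨j, rfl⟩ := Nat.exists_eq_add_of_le hns
    rw [Qs_add hmn.le, Qs_add le_rfl, Qs_self]
    exact ((Qbelow_isOrtho_Qnn n).mono_left (Qs_le_Qbelow hmn)).map_of_inner_map_map
      (inner_P_pow_P_pow hP j)
  · exact (ellS_isOrtho hrs).mono (Qs_le_ellS hP hmr) (Qs_le_ellS hP hns)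

lemma Msub_isOrtho {m n : ℕ} (hmn : m ≠ n) : Msub P m ⟂ Msub P n := by
  refine Submodule.isOrtho_iSup_left.2 fun j => Submodule.isOrtho_iSup_right.2 fun k => ?_
  rcases hmn.lt_or_gt with h | h
  · exact Qs_isOrtho_of_lt hP h (by omega) (by omega)
  · exact (Qs_isOrtho_of_lt hP h (by omega) (by omega)).symm

lemma orthogonal_iSup_Msub : (⨆ n, Msub P n)ᗮ = ⊥ := by
  have hellS (r : ℕ) : ellS r ≤ ⨆ n, Msub P n := by
    refine (ellS_le_Qbelow_sup_Qnn hP r).trans (sup_le (iSup_le fun m => ?_) ?_)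
    · exact (Qs_le_Msub m.isLt.le).trans (le_iSup (Msub P) m)
    · rw [← Qs_self]
      exact (Qs_le_Msub le_rfl).trans (le_iSup (Msub P) r)
  refine (Submodule.eq_bot_iff _).2 fun ψ hψ => ?_
  ext v
  rw [apply_eq_inner_single,
    Submodule.inner_right_of_mem_orthogonal (hellS _ (single_mem_ellS v)) hψ]
  rfl

lemma Msub_le_comap_adjoint (n : ℕ) :
    Msub P n ≤ (Msub P n).comap (ContinuousLinearMap.adjoint P : H2 →ₗ[ℂ] H2) := by
  refine iSup_le fun j ψ hψ => Submodule.mem_comap.2 ?_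
  cases j with
  | zero =>
    rw [add_zero, Qs_self] at hψ
    rw [ContinuousLinearMap.coe_coe, adjoint_P_eq_zero_of_mem_Qnn hP hψ]
    exact zero_mem _
  | succ j =>
    rw [← add_assoc, Qs_succ (Nat.le_add_right n j)] at hψ
    obtain ⟨x, hx, rfl⟩ := hψ
    rw [ContinuousLinearMap.coe_coe, ContinuousLinearMap.coe_coe, adjoint_P_P hP]
    exact Submodule.smul_mem _ _ (Qs_le_Msub (Nat.le_add_right n j) hx)

end TreeShift

theorem M_orthogonal_decomposition_and_invariance
    (P : H2 →L[ℂ] H2)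
    (hP : ∀ (φ : H2) (v : List Bool),
      P φ v = if v = [] then 0 else φ v.tail) :
    (∀ m n : ℕ, m ≠ n → ∀ φ ∈ Msub P m, ∀ ψ ∈ Msub P n, ⟪φ, ψ⟫_ℂ = 0) ∧
    (⨆ n : ℕ, Msub P n).topologicalClosure = ⊤ ∧
    (∀ n : ℕ, ∀ φ ∈ Msub P n,
      P φ ∈ Msub P n ∧ (ContinuousLinearMap.adjoint P) φ ∈ Msub P n) :=
  ⟨fun _ _ hmn _ hφ _ hψ => (Msub_isOrtho hP hmn).inner_eq hφ hψ,
    Submodule.topologicalClosure_eq_top_iff.2 (orthogonal_iSup_Msub hP),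
    fun n _ hφ => ⟨Msub_le_comap n hφ, Msub_le_comap_adjoint hP n hφ⟩⟩

end
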